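/- arXiv:1902.09740 — 2 statements merged into one kernel-verified Lean document; each statement's English description precedes it below -/
import Mathlib

section
/- Fix k > 0, α > 0, and grid functions p and m̂. Then there exists exactly one grid function m̃ satisfying, at every grid point, ( (3/2)·m̃ − p )/k = − m̂ × (Δ_h m̃) − α · m̂ × ( m̂ × (Δ_h m̃) ). In other words, the linear map m̃ ↦ (3/(2k))·m̃ + m̂ × (Δ_h m̃) + α · m̂ × ( m̂ × (Δ_h m̃) ) from grid functions to grid functions is bijective. -/
noncomputable section

open Finset

/-- Euclidean dot product on ℝ³. -/
def dot3 (a b : Fin 3 → ℝ) : ℝ := ∑ j, a j * b j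

/-- Euclidean norm on ℝ³. -/
def norm3 (a : Fin 3 → ℝ) : ℝ := Real.sqrt (dot3 a a)

/-- Cross product on ℝ³. -/
def cross3 (a b : Fin 3 → ℝ) : Fin 3 → ℝ :=
  ![a 1 * b 2 - a 2 * b 1, a 2 * b 0 - a 0 * b 2, a 0 * b 1 - a 1 * b 0]

/-- Mesh size `h = 1/N` of the uniform 1-D grid with `N` cells. -/
def gridh (N : ℕ) : ℝ := 1 / N

/-- Neumann discrete Laplacian on grid functions `{1,…,N} → ℝ³`. -/
def glap (N : ℕ) (f : ℕ → Fin 3 → ℝ) : ℕ → Fin 3 → ℝ := fun i =>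
  if i = 1 then ((gridh N) ^ 2)⁻¹ • (f 2 - f 1)
  else if i = N then ((gridh N) ^ 2)⁻¹ • (f (N - 1) - f N)
  else ((gridh N) ^ 2)⁻¹ • (f (i + 1) - (2 : ℝ) • f i + f (i - 1))

/-- Discrete gradient `(∇_h f)_i = (f_{i+1} − f_i)/h`. -/
def ggrad (N : ℕ) (f : ℕ → Fin 3 → ℝ) : ℕ → Fin 3 → ℝ := fun i =>
  (gridh N)⁻¹ • (f (i + 1) - f i)

/-- Discrete inner product `⟨f,g⟩ = h ∑_{i=1}^N f_i · g_i`. -/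
def gip (N : ℕ) (f g : ℕ → Fin 3 → ℝ) : ℝ :=
  gridh N * ∑ i ∈ Finset.Icc 1 N, dot3 (f i) (g i)

/-- Discrete `‖·‖₂` norm. -/
def gnorm2 (N : ℕ) (f : ℕ → Fin 3 → ℝ) : ℝ := Real.sqrt (gip N f f)

/-- Discrete inner product of gradients `⟨∇_h f, ∇_h g⟩ = h ∑_{i=1}^{N−1} (∇_h f)_i · (∇_h g)_i`. -/
def gipGrad (N : ℕ) (f g : ℕ → Fin 3 → ℝ) : ℝ :=
  gridh N * ∑ i ∈ Finset.Icc 1 (N - 1), dot3 (ggrad N f i) (ggrad N g i)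

/-- Discrete `‖∇_h ·‖₂` norm. -/
def gnormGrad (N : ℕ) (f : ℕ → Fin 3 → ℝ) : ℝ := Real.sqrt (gipGrad N f f)

/-- Discrete `‖·‖_∞` norm. -/
def gsup (N : ℕ) (f : ℕ → Fin 3 → ℝ) : ℝ := ⨆ i ∈ Finset.Icc 1 N, norm3 (f i)

/-- Discrete `‖∇_h ·‖_∞` norm. -/
def gsupGrad (N : ℕ) (f : ℕ → Fin 3 → ℝ) : ℝ :=
  ⨆ i ∈ Finset.Icc 1 (N - 1), norm3 (ggrad N f i)

/-!
Testing `c m + m̂ × Δ_h m + α m̂ × (m̂ × Δ_h m) = 0` against `Δ_h m` kills the precession term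
and turns the damping term into `−α |m̂ × Δ_h m|² ≤ 0`, so `c ⟨m, Δ_h m⟩ ≥ 0`. Summation by
parts with the Neumann boundary condition gives `⟨m, Δ_h m⟩ = −‖∇_h m‖² ≤ 0`, hence
`∇_h m = 0`, `Δ_h m = 0` and `m = 0`. The step operator is therefore injective on grid functions,
and bijective since their space is finite-dimensional.
-/

open Matrix

lemma cross3_eq_crossProduct (a b : Fin 3 → ℝ) : cross3 a b = a ⨯₃ b := rfl

lemma dot3_eq_dotProduct (a b : Fin 3 → ℝ) : dot3 a b = a ⬝ᵥ b := rfl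

lemma gridh_nonneg (N : ℕ) : 0 ≤ gridh N := by
  unfold gridh; positivity

lemma gridh_pos {N : ℕ} (hN : N ≠ 0) : 0 < gridh N := by
  unfold gridh; positivity

theorem sum_Icc_dotProduct_sub_by_parts {R ι : Type*} [CommRing R] [Fintype ι]
    (f F : ℕ → ι → R) (n : ℕ) :
    ∑ i ∈ Icc 1 n, f i ⬝ᵥ (F i - F (i - 1))
      = f (n + 1) ⬝ᵥ F n - f 1 ⬝ᵥ F 0 - ∑ i ∈ Icc 1 n, (f (i + 1) - f i) ⬝ᵥ F i := by
  induction n with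
  | zero => simp
  | succ n ih =>
    rw [sum_Icc_succ_top (by omega), sum_Icc_succ_top (by omega), ih, Nat.add_sub_cancel]
    simp only [dotProduct_sub, sub_dotProduct]
    ring

/-- The Neumann condition is encoded as zero flux through both ends:
`Δ_h g = (F_i − F_{i−1}) / h` with `F_0 = F_N = 0`. -/
def neumannFlux (N : ℕ) (g : ℕ → Fin 3 → ℝ) (i : ℕ) : Fin 3 → ℝ :=
  if i ∈ Icc 1 (N - 1) then ggrad N g i else 0

lemma glap_eq_smul_neumannFlux_sub {N i : ℕ} (hN : 2 ≤ N) (hi : i ∈ Icc 1 N)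
    (g : ℕ → Fin 3 → ℝ) :
    glap N g i = (gridh N)⁻¹ • (neumannFlux N g i - neumannFlux N g (i - 1)) := by
  obtain ⟨j, rfl⟩ : ∃ j, i = j + 1 := ⟨i - 1, by grind⟩
  obtain ⟨M, rfl⟩ : ∃ M, N = M + 1 := ⟨N - 1, by omega⟩
  unfold glap neumannFlux ggrad
  simp only [Nat.add_sub_cancel, add_left_inj, Nat.add_eq_right]
  split_ifs <;> simp only [mem_Icc] at * <;> first | omega | (subst_vars; module)

theorem gip_glap {N : ℕ} (hN : 2 ≤ N) (f g : ℕ → Fin 3 → ℝ) :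
    gip N f (glap N g) = -gipGrad N f g := by
  have hh : gridh N ≠ 0 := (gridh_pos (by omega)).ne'
  set F := neumannFlux N g
  obtain ⟨M, rfl⟩ : ∃ M, N = M + 1 := ⟨N - 1, by omega⟩
  have hF_top : F (M + 1) = 0 := by simp [F, neumannFlux]
  have hF_interior : ∀ i ∈ Icc 1 M, F i = ggrad (M + 1) g i := fun i hi => by
    simp [F, neumannFlux, hi]
  calc gip (M + 1) f (glap (M + 1) g) = ∑ i ∈ Icc 1 (M + 1), f i ⬝ᵥ (F i - F (i - 1)) := by
        rw [gip, mul_sum]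
        refine sum_congr rfl fun i hi => ?_
        rw [dot3_eq_dotProduct, glap_eq_smul_neumannFlux_sub hN hi, dotProduct_smul, smul_eq_mul,
          mul_inv_cancel_left₀ hh]
    _ = -∑ i ∈ Icc 1 M, (f (i + 1) - f i) ⬝ᵥ ggrad (M + 1) g i := by
        rw [sum_Icc_dotProduct_sub_by_parts, sum_Icc_succ_top (by omega), hF_top,
          sum_congr rfl fun i hi => congrArg _ (hF_interior i hi)]
        simp [F, neumannFlux]
    _ = -gipGrad (M + 1) f g := by
        rw [gipGrad, Nat.add_sub_cancel, mul_sum]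
        congr 1
        refine sum_congr rfl fun i _ => ?_
        unfold ggrad
        rw [dot3_eq_dotProduct, smul_dotProduct, smul_eq_mul, mul_inv_cancel_left₀ hh]

lemma dot3_self_nonneg (a : Fin 3 → ℝ) : 0 ≤ dot3 a a :=
  sum_nonneg fun j _ => mul_self_nonneg (a j)

lemma gipGrad_self_nonneg (N : ℕ) (m : ℕ → Fin 3 → ℝ) : 0 ≤ gipGrad N m m :=
  mul_nonneg (gridh_nonneg N) (sum_nonneg fun _ _ => dot3_self_nonneg _)

lemma glap_eq_zero_of_gipGrad_self_eq_zero {N : ℕ} (hN : 2 ≤ N) {m : ℕ → Fin 3 → ℝ}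
    (h : gipGrad N m m = 0) : ∀ i ∈ Icc 1 N, glap N m i = 0 := by
  have hgrad : ∀ i ∈ Icc 1 (N - 1), ggrad N m i = 0 := by
    rw [gipGrad, mul_eq_zero, or_iff_right (gridh_pos (by omega)).ne',
      sum_eq_zero_iff_of_nonneg fun i _ => dot3_self_nonneg _] at h
    exact fun i hi => dotProduct_self_eq_zero.1 (h i hi)
  have hflux (i : ℕ) : neumannFlux N m i = 0 := by
    unfold neumannFlux
    split_ifs with hi
    exacts [hgrad i hi, rfl]
  intro i hi
  rw [glap_eq_smul_neumannFlux_sub hN hi, hflux, hflux, sub_zero, smul_zero]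

lemma smul_add_cross_add_smul_cross_cross_dotProduct {R : Type*} [CommRing R] (c α : R)
    (u a b : Fin 3 → R) :
    (c • u + a ⨯₃ b + α • a ⨯₃ (a ⨯₃ b)) ⬝ᵥ b = c * u ⬝ᵥ b - α * (a ⨯₃ b ⬝ᵥ a ⨯₃ b) := by
  simp only [add_dotProduct, smul_dotProduct, smul_eq_mul]
  simp_rw [cross_apply, vec3_dotProduct]
  dsimp only [Matrix.cons_val]
  ring

def glapₗ (N : ℕ) : (ℕ → Fin 3 → ℝ) →ₗ[ℝ] (ℕ → Fin 3 → ℝ) where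
  toFun := glap N
  map_add' f g := by
    funext i
    simp only [glap, Pi.add_apply]
    split_ifs <;> module
  map_smul' r f := by
    funext i
    simp only [glap, Pi.smul_apply, RingHom.id_apply]
    split_ifs <;> module

def crossLeft (a : ℕ → Fin 3 → ℝ) : (ℕ → Fin 3 → ℝ) →ₗ[ℝ] (ℕ → Fin 3 → ℝ) :=
  LinearMap.pi fun i => crossProduct (a i) ∘ₗ LinearMap.proj i

def stepOperator (N : ℕ) (c α : ℝ) (mhat : ℕ → Fin 3 → ℝ) :
    (ℕ → Fin 3 → ℝ) →ₗ[ℝ] (ℕ → Fin 3 → ℝ) :=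
  c • LinearMap.id + crossLeft mhat ∘ₗ glapₗ N + α • (crossLeft mhat ∘ₗ crossLeft mhat ∘ₗ glapₗ N)

lemma stepOperator_apply (N : ℕ) (c α : ℝ) (mhat m : ℕ → Fin 3 → ℝ) (i : ℕ) :
    stepOperator N c α mhat m i
      = c • m i + mhat i ⨯₃ glap N m i + α • mhat i ⨯₃ (mhat i ⨯₃ glap N m i) := rfl

theorem eq_zero_of_stepOperator_eq_zero {N : ℕ} (hN : 2 ≤ N) {c α : ℝ} (hc : 0 < c)
    (hα : 0 ≤ α) {mhat m : ℕ → Fin 3 → ℝ} (h : ∀ i ∈ Icc 1 N, stepOperator N c α mhat m i = 0) :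
    ∀ i ∈ Icc 1 N, m i = 0 := by
  have hterm : ∀ i ∈ Icc 1 N, 0 ≤ dot3 (m i) (glap N m i) := fun i hi => by
    have hdot := smul_add_cross_add_smul_cross_cross_dotProduct c α (m i) (mhat i) (glap N m i)
    rw [← stepOperator_apply, h i hi, zero_dotProduct] at hdot
    have hcross := dot3_self_nonneg (mhat i ⨯₃ glap N m i)
    rw [dot3_eq_dotProduct] at hcross ⊢
    nlinarith [mul_nonneg hα hcross]
  have hgrad : gipGrad N m m = 0 := by
    have hgip : 0 ≤ gip N m (glap N m) := mul_nonneg (gridh_nonneg N) (sum_nonneg hterm)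
    linarith [gip_glap hN m m, gipGrad_self_nonneg N m]
  intro i hi
  have hi' := h i hi
  rw [stepOperator_apply, glap_eq_zero_of_gipGrad_self_eq_zero hN hgrad i hi] at hi'
  simpa [hc.ne'] using hi'

def extendByZero {R ι M : Type*} [Semiring R] [AddCommMonoid M] [Module R M] (s : Set ι)
    [DecidablePred (· ∈ s)] : (s → M) →ₗ[R] (ι → M) where
  toFun f i := if h : i ∈ s then f ⟨i, h⟩ else 0
  map_add' f g := by
    funext i
    by_cases h : i ∈ s <;> simp [h]
  map_smul' r f := by
    funext i
    by_cases h : i ∈ s <;> simp [h]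

lemma extendByZero_apply_of_mem {R ι M : Type*} [Semiring R] [AddCommMonoid M] [Module R M]
    {s : Set ι} [DecidablePred (· ∈ s)] (f : s → M) {i : ι} (h : i ∈ s) :
    extendByZero (R := R) s f i = f ⟨i, h⟩ :=
  dif_pos h

theorem exists_stepOperator_eq {N : ℕ} (hN : 2 ≤ N) {c α : ℝ} (hc : 0 < c) (hα : 0 ≤ α)
    (mhat q : ℕ → Fin 3 → ℝ) : ∃ m, ∀ i ∈ Icc 1 N, stepOperator N c α mhat m i = q i := by
  let s : Set ℕ := Icc 1 N
  let S := LinearMap.funLeft ℝ (Fin 3 → ℝ) ((↑) : s → ℕ) ∘ₗ stepOperator N c α mhat ∘ₗ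
    extendByZero s
  have hS : Function.Injective S := by
    refine (injective_iff_map_eq_zero S).2 fun f hf => funext fun j => ?_
    have hzero := eq_zero_of_stepOperator_eq_zero hN hc hα (m := extendByZero s f)
      (fun i hi => congrFun hf ⟨i, hi⟩) j j.2
    rwa [extendByZero_apply_of_mem f j.2] at hzero
  obtain ⟨f, hf⟩ := LinearMap.injective_iff_surjective.1 hS fun j => q j
  exact ⟨extendByZero s f, fun i hi => congrFun hf ⟨i, hi⟩⟩

lemma bdf2_step_iff_stepOperator_eq (N : ℕ) (k α : ℝ) (mhat m p : ℕ → Fin 3 → ℝ) (i : ℕ) :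
    k⁻¹ • ((3 / 2 : ℝ) • m i - p i)
        = -cross3 (mhat i) (glap N m i) - α • cross3 (mhat i) (cross3 (mhat i) (glap N m i))
      ↔ stepOperator N (3 / (2 * k)) α mhat m i = k⁻¹ • p i := by
  rw [stepOperator_apply]
  simp only [cross3_eq_crossProduct]
  constructor <;> intro h <;> linear_combination (norm := module) h

/-- unique solvability of the semi-implicit BDF2 time-marching step:
there is exactly one grid function `m̃` on `{1,…,N}` solving
`((3/2)·m̃ − p)/k = − m̂ × Δ_h m̃ − α·m̂ × (m̂ × Δ_h m̃)` at every grid point. -/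
theorem semi_implicit_step_uniquely_solvable
    (N : ℕ) (hN : 2 ≤ N) (k α : ℝ) (hk : 0 < k) (hα : 0 < α)
    (p mhat : ℕ → Fin 3 → ℝ) :
    (∃ mt : ℕ → Fin 3 → ℝ, ∀ i ∈ Finset.Icc 1 N,
        k⁻¹ • ((3 / 2 : ℝ) • mt i - p i) =
          - cross3 (mhat i) (glap N mt i)
            - α • cross3 (mhat i) (cross3 (mhat i) (glap N mt i))) ∧
    (∀ mt₁ mt₂ : ℕ → Fin 3 → ℝ,
        (∀ i ∈ Finset.Icc 1 N,
          k⁻¹ • ((3 / 2 : ℝ) • mt₁ i - p i) =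
            - cross3 (mhat i) (glap N mt₁ i)
              - α • cross3 (mhat i) (cross3 (mhat i) (glap N mt₁ i))) →
        (∀ i ∈ Finset.Icc 1 N,
          k⁻¹ • ((3 / 2 : ℝ) • mt₂ i - p i) =
            - cross3 (mhat i) (glap N mt₂ i)
              - α • cross3 (mhat i) (cross3 (mhat i) (glap N mt₂ i))) →
        ∀ i ∈ Finset.Icc 1 N, mt₁ i = mt₂ i) := by
  have hc : 0 < 3 / (2 * k) := by positivity
  simp only [bdf2_step_iff_stepOperator_eq]
  refine ⟨exists_stepOperator_eq hN hc hα.le mhat _, fun mt₁ mt₂ h₁ h₂ => ?_⟩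
  have hdiff := eq_zero_of_stepOperator_eq_zero hN hc hα.le (m := mt₁ - mt₂) fun i hi => by
    rw [map_sub, Pi.sub_apply, h₁ i hi, h₂ i hi, sub_self]
  exact fun i hi => sub_eq_zero.1 (hdiff i hi)
end
end

section
/- Fifth-order accuracy of the corrected ghost-point extrapolation: there is an absolute constant C > 0 with the following property. Let h > 0, let f : ℝ → ℝ be five times continuously differentiable on [−h/2, h/2] with f'(0) = 0 and |f⁽⁵⁾| ≤ M₁ there, and let φ : ℝ → ℝ be three times continuously differentiable on [−h/2, h/2] with φ'(0) = −(1/24)·f'''(0) and |φ'''| ≤ M₂ there. Set g = f + h²·φ. Then | g(−h/2) − g(h/2) | ≤ C·(M₁ + M₂)·h⁵. -/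
/-!
Expand `f` to order four and `φ` to order two about `0` on `[-h/2, h/2]`, with Lagrange
remainders. In `g(-h/2) - g(h/2)` the even Taylor terms cancel, and of the odd ones only
`-h f'(0) - (h³/24) f'''(0) - h³ φ'(0)` survives, which vanishes by the two hypotheses
at `0`. What is left is the difference of the remainders: `O(M₁ h⁵)` for `f` and
`h² · O(M₂ h³)` for `φ`.
-/

open Set

theorem iteratedDerivWithin_subset {f : ℝ → ℝ} {s t : Set ℝ} {n : ℕ} {x : ℝ}
    (st : s ⊆ t) (hs : UniqueDiffOn ℝ s) (ht : UniqueDiffOn ℝ t) (h : ContDiffOn ℝ n f t)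
    (hx : x ∈ s) :
    iteratedDerivWithin n f s x = iteratedDerivWithin n f t x := by
  simp only [iteratedDerivWithin_eq_iteratedFDerivWithin,
    iteratedFDerivWithin_subset st hs ht h hx]

theorem taylorWithinEval_subset {f : ℝ → ℝ} {s t : Set ℝ} {n : ℕ} {x₀ : ℝ}
    (st : s ⊆ t) (hs : UniqueDiffOn ℝ s) (ht : UniqueDiffOn ℝ t) (h : ContDiffOn ℝ n f t)
    (hx₀ : x₀ ∈ s) (x : ℝ) :
    taylorWithinEval f n s x₀ x = taylorWithinEval f n t x₀ x := by
  simp only [taylor_within_apply]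
  refine Finset.sum_congr rfl fun k hk => ?_
  have hkn : k ≤ n := Finset.mem_range_succ_iff.mp hk
  rw [iteratedDerivWithin_subset st hs ht (h.of_le (by exact_mod_cast hkn)) hx₀]

theorem abs_sub_taylorWithinEval_Icc_le {f : ℝ → ℝ} {a b x₀ x C : ℝ} {n : ℕ}
    (hf : ContDiffOn ℝ (n + 1) f (Icc a b)) (hx₀ : x₀ ∈ Icc a b) (hx : x ∈ Icc a b)
    (hC : ∀ y ∈ Icc a b, |iteratedDerivWithin (n + 1) f (Icc a b) y| ≤ C) :
    |f x - taylorWithinEval f n (Icc a b) x₀ x| ≤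
      C * |x - x₀| ^ (n + 1) / (n + 1).factorial := by
  rcases eq_or_ne x₀ x with rfl | hne
  · simp [taylorWithinEval_self]
  have hsub : uIcc x₀ x ⊆ Icc a b := uIcc_subset_Icc hx₀ hx
  have hu : UniqueDiffOn ℝ (uIcc x₀ x) := uniqueDiffOn_uIcc hne
  have hab : UniqueDiffOn ℝ (Icc a b) :=
    uniqueDiffOn_Icc (by rcases hne.lt_or_gt with h | h <;> linarith [hx₀.1, hx₀.2, hx.1, hx.2])
  have hfn : ContDiffOn ℝ n f (Icc a b) := hf.of_le (by norm_cast; omega)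
  obtain ⟨y, hy, hrem⟩ := taylor_mean_remainder_lagrange hne (hfn.mono hsub)
    (((hf.mono hsub).differentiableOn_iteratedDerivWithin (by norm_cast; omega) hu).mono
      uIoo_subset_uIcc_self)
  rw [← taylorWithinEval_subset hsub hu hab hfn left_mem_uIcc, hrem,
    iteratedDerivWithin_subset hsub hu hab hf (uIoo_subset_uIcc_self hy), abs_div, abs_mul,
    abs_pow, abs_of_pos (by positivity : (0 : ℝ) < (n + 1).factorial)]
  gcongr
  exact hC y (hsub (uIoo_subset_uIcc_self hy))

theorem abs_sub_taylorWithinEval_zero_le {f : ℝ → ℝ} {r M x : ℝ} {n : ℕ}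
    (hf : ContDiffOn ℝ (n + 1) f (Icc (-r) r))
    (hM : ∀ y ∈ Icc (-r) r, |iteratedDerivWithin (n + 1) f (Icc (-r) r) y| ≤ M)
    (hx : x ∈ Icc (-r) r) :
    |f x - taylorWithinEval f n (Icc (-r) r) 0 x| ≤ M * r ^ (n + 1) / (n + 1).factorial := by
  have h0 : (0 : ℝ) ∈ Icc (-r) r := ⟨by linarith [hx.1, hx.2], by linarith [hx.1, hx.2]⟩
  refine (abs_sub_taylorWithinEval_Icc_le hf h0 hx hM).trans ?_
  have hM0 : 0 ≤ M := (abs_nonneg _).trans (hM 0 h0)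
  rw [sub_zero]
  gcongr
  exact abs_le.mpr hx

theorem abs_taylorRemainder_neg_sub_le {f : ℝ → ℝ} {r M : ℝ} {n : ℕ} (hr : 0 ≤ r)
    (hf : ContDiffOn ℝ (n + 1) f (Icc (-r) r))
    (hM : ∀ y ∈ Icc (-r) r, |iteratedDerivWithin (n + 1) f (Icc (-r) r) y| ≤ M) :
    |(f (-r) - taylorWithinEval f n (Icc (-r) r) 0 (-r)) -
        (f r - taylorWithinEval f n (Icc (-r) r) 0 r)| ≤
      2 * (M * r ^ (n + 1) / (n + 1).factorial) := by
  refine (abs_sub _ _).trans ?_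
  rw [two_mul]
  gcongr <;> apply abs_sub_taylorWithinEval_zero_le hf hM
  · exact ⟨le_rfl, by linarith⟩
  · exact ⟨by linarith, le_rfl⟩

theorem taylorWithinEval_four_neg_sub (f : ℝ → ℝ) (s : Set ℝ) (r : ℝ) :
    taylorWithinEval f 4 s 0 (-r) - taylorWithinEval f 4 s 0 r =
      -(2 * r) * derivWithin f s 0 - r ^ 3 / 3 * iteratedDerivWithin 3 f s 0 := by
  simp [taylor_within_apply, Nat.factorial]
  ring

theorem taylorWithinEval_two_neg_sub (f : ℝ → ℝ) (s : Set ℝ) (r : ℝ) :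
    taylorWithinEval f 2 s 0 (-r) - taylorWithinEval f 2 s 0 r =
      -(2 * r) * derivWithin f s 0 := by
  simp [taylor_within_apply, Nat.factorial]
  ring

/-- fifth-order accuracy of the corrected ghost-point extrapolation: with
`g = f + h²·φ`, where `f` is C⁵ with `f'(0) = 0`, `|f⁽⁵⁾| ≤ M₁`, and `φ` is C³ with
`φ'(0) = −(1/24)·f'''(0)`, `|φ'''| ≤ M₂` on `[−h/2, h/2]`, one has
`|g(−h/2) − g(h/2)| ≤ C·(M₁ + M₂)·h⁵` for an absolute constant `C`. -/
theorem corrected_ghost_point_fifth_order :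
    ∃ C > (0:ℝ), ∀ h : ℝ, 0 < h → ∀ f φ : ℝ → ℝ, ∀ M₁ M₂ : ℝ,
      ContDiffOn ℝ 5 f (Set.Icc (-(h / 2)) (h / 2)) →
      derivWithin f (Set.Icc (-(h / 2)) (h / 2)) 0 = 0 →
      (∀ s ∈ Set.Icc (-(h / 2)) (h / 2),
        |iteratedDerivWithin 5 f (Set.Icc (-(h / 2)) (h / 2)) s| ≤ M₁) →
      ContDiffOn ℝ 3 φ (Set.Icc (-(h / 2)) (h / 2)) →
      derivWithin φ (Set.Icc (-(h / 2)) (h / 2)) 0 =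
        -(1 / 24) * iteratedDerivWithin 3 f (Set.Icc (-(h / 2)) (h / 2)) 0 →
      (∀ s ∈ Set.Icc (-(h / 2)) (h / 2),
        |iteratedDerivWithin 3 φ (Set.Icc (-(h / 2)) (h / 2)) s| ≤ M₂) →
      |(f (-(h / 2)) + h ^ 2 * φ (-(h / 2))) - (f (h / 2) + h ^ 2 * φ (h / 2))|
        ≤ C * (M₁ + M₂) * h ^ 5 := by
  refine ⟨1 / 24, by norm_num, fun h hh f φ M₁ M₂ hf hf' hM₁ hφ hφ' hM₂ => ?_⟩
  set r := h / 2 with hr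
  set J := Icc (-r) r
  set Tf := taylorWithinEval f 4 J 0
  set Tφ := taylorWithinEval φ 2 J 0
  have hM₁0 : 0 ≤ M₁ := (abs_nonneg _).trans (hM₁ 0 ⟨by linarith, by linarith⟩)
  have Ef := abs_taylorRemainder_neg_sub_le (n := 4) (by positivity) hf hM₁
  have Eφ := abs_taylorRemainder_neg_sub_le (n := 2) (by positivity) hφ hM₂
  have hcancel : Tf (-r) - Tf r + h ^ 2 * (Tφ (-r) - Tφ r) = 0 := by
    rw [taylorWithinEval_four_neg_sub, taylorWithinEval_two_neg_sub, hf', hφ', hr]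
    ring
  calc _ = |(f (-r) - Tf (-r)) - (f r - Tf r)
          + h ^ 2 * ((φ (-r) - Tφ (-r)) - (φ r - Tφ r))| := by
        congr 1; linear_combination hcancel
    _ ≤ 2 * (M₁ * r ^ 5 / (4 + 1).factorial)
          + h ^ 2 * (2 * (M₂ * r ^ 3 / (2 + 1).factorial)) := by
        refine (abs_add_le _ _).trans ?_
        rw [abs_mul, abs_of_nonneg (sq_nonneg h)]
        gcongr
    _ ≤ 1 / 24 * (M₁ + M₂) * h ^ 5 := by
        rw [hr]
        norm_num [Nat.factorial]
        nlinarith [mul_nonneg hM₁0 (pow_nonneg hh.le 5)]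
end
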